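/- arXiv:1206.1162 — 2 statements merged into one kernel-verified Lean document; each statement's English description precedes it below -/
import Mathlib

section
/- Let $A_0$ be a closed, densely defined operator on a Banach space $X_0$ such that $0$ is a semi-simple eigenvalue, i.e. $X_0 = N(A_0) \oplus R(A_0)$ with $R(A_0)$ closed and $N(A_0) \neq \{0\}$. Then $0$ is an isolated point of the spectrum $\sigma(A_0)$. -/
/-!
Write `N = ker A` and `R = range A`. On `D ∩ R` the operator `A` is a bijection onto `R`: it is
injective because `N ∩ R = 0`, and onto because the `N`-component of any `d ∈ D` lies in
`ker A ⊆ D`. Its inverse `S : R → R` has closed graph, hence is bounded. The kernel of a closed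
operator is closed, so `X = N ⊕ R` is a topological direct sum, and for `0 < ‖λ‖ < ‖S‖⁻¹` the
resolvent of `A` at `λ` is `λ⁻¹` on `N` and `-S (1 - λ S)⁻¹` on `R`, the latter inverse being a
Neumann series. Finally `0` lies in the spectrum since `N ≠ 0`.
-/

open LinearMap Submodule

section ClosedOperator

variable {𝕜 X : Type*} [NontriviallyNormedField 𝕜] [NormedAddCommGroup X] [NormedSpace 𝕜 X]
  {D : Submodule 𝕜 X} (A : D →ₗ[𝕜] X)

theorem isClosed_map_ker_of_isClosed_graph
    (hclosed : IsClosed {p : X × X | ∃ d : D, (d : X) = p.1 ∧ A d = p.2}) :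
    IsClosed ((ker A).map D.subtype : Set X) := by
  have hker : ((ker A).map D.subtype : Set X) =
      (fun x => (x, 0)) ⁻¹' {p : X × X | ∃ d : D, (d : X) = p.1 ∧ A d = p.2} := by
    ext x
    simp only [map_coe, Set.mem_image, SetLike.mem_coe, mem_ker, Set.mem_preimage,
      Set.mem_ofPred_eq, coe_subtype]
    exact exists_congr fun d => and_comm
  rw [hker]
  exact hclosed.preimage (by fun_prop)

theorem exists_mem_ker_sub_mem_range
    (hsum : Codisjoint ((ker A).map D.subtype) (range A)) (d : D) :
    ∃ k ∈ ker A, ((d - k : D) : X) ∈ range A := by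
  obtain ⟨n, hn, r, hr, hnr⟩ := mem_sup.1 (hsum.eq_top ▸ mem_top : (d : X) ∈ _ ⊔ _)
  obtain ⟨k, hk, rfl⟩ := mem_map.1 hn
  refine ⟨k, hk, ?_⟩
  rwa [Submodule.coe_sub, ← hnr, coe_subtype, add_sub_cancel_left]

theorem exists_linearMap_inverse_on_range
    (hc : IsCompl ((ker A).map D.subtype) (range A)) :
    ∃ S : range A →ₗ[𝕜] range A,
      ∀ y r : range A, S y = r ↔ ∃ d : D, (d : X) = r ∧ A d = y := by
  set DR := (range A).comap D.subtype
  set f : DR →ₗ[𝕜] range A := A.rangeRestrict.domRestrict DR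
  set ι : DR →ₗ[𝕜] range A := (D.subtype ∘ₗ DR.subtype).codRestrict (range A) fun x => x.2
  have hf : Function.Bijective f := by
    refine ⟨(injective_iff_map_eq_zero f).2 fun x hx => ?_, fun y => ?_⟩
    · have hxN : ((x : D) : X) ∈ (ker A).map D.subtype :=
        mem_map_of_mem (p := ker A) (congrArg Subtype.val hx)
      have := hc.disjoint.le_bot ⟨hxN, x.2⟩
      ext
      simpa using this
    · obtain ⟨d, hd⟩ := y.2
      obtain ⟨k, hk, hdk⟩ := exists_mem_ker_sub_mem_range A hc.codisjoint d
      refine ⟨⟨d - k, hdk⟩, Subtype.ext ?_⟩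
      simp [f, map_sub, mem_ker.1 hk, hd]
  set e := LinearEquiv.ofBijective f hf
  refine ⟨ι ∘ₗ e.symm.toLinearMap, fun y r => ⟨?_, ?_⟩⟩
  · rintro rfl
    refine ⟨e.symm y, rfl, ?_⟩
    exact congrArg Subtype.val (e.apply_symm_apply y)
  · rintro ⟨d, hdr, hdy⟩
    have hd : d ∈ DR := show (d : X) ∈ range A from hdr ▸ r.2
    have : e.symm y = ⟨d, hd⟩ := e.symm_apply_eq.2 (Subtype.ext hdy.symm)
    show ι (e.symm y) = r
    rw [this]
    exact Subtype.ext hdr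

theorem exists_continuousLinearMap_inverse_on_range [CompleteSpace X]
    (hclosed : IsClosed {p : X × X | ∃ d : D, (d : X) = p.1 ∧ A d = p.2})
    (hrange : IsClosed (range A : Set X)) (hc : IsCompl ((ker A).map D.subtype) (range A)) :
    ∃ S : range A →L[𝕜] range A,
      ∀ y r : range A, S y = r ↔ ∃ d : D, (d : X) = r ∧ A d = y := by
  obtain ⟨S, hS⟩ := exists_linearMap_inverse_on_range A hc
  have : CompleteSpace (range A) := hrange.completeSpace_coe
  have hgraph : (S.graph : Set (range A × range A)) =
      (fun p => ((p.2 : X), (p.1 : X))) ⁻¹'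
        {p : X × X | ∃ d : D, (d : X) = p.1 ∧ A d = p.2} := by
    ext p
    exact (eq_comm.trans (hS p.1 p.2))
  have hgraph_closed : IsClosed (S.graph : Set (range A × range A)) :=
    hgraph ▸ hclosed.preimage (by fun_prop)
  exact ⟨⟨S, S.continuous_of_isClosed_graph hgraph_closed⟩, hS⟩

theorem exists_resolvent_on_range [CompleteSpace (range A)]
    {S : range A →L[𝕜] range A}
    (hS : ∀ y r : range A, S y = r ↔ ∃ d : D, (d : X) = r ∧ A d = y)
    {lam : 𝕜} (hlam : ‖lam • S‖ < 1) :
    ∃ U : range A →L[𝕜] range A,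
      ∀ y r : range A, U y = r ↔ ∃ d : D, (d : X) = r ∧ lam • (d : X) - A d = y := by
  -- On `D ∩ R` we have `λ - A = -(1 - λ S) A`, so `-S (1 - λ S)⁻¹` inverts `λ - A` there.
  set u := Units.oneSub (lam • S) hlam
  set T : range A →L[𝕜] range A := ↑u⁻¹
  have hT₁ (z) : T z - lam • S (T z) = z := DFunLike.congr_fun u.mul_inv z
  have hT₂ (z) : T (z - lam • S z) = z := DFunLike.congr_fun u.inv_mul z
  refine ⟨-(S ∘L T), fun y r => ⟨?_, ?_⟩⟩
  · rintro rfl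
    obtain ⟨d, hd, hdz⟩ := (hS (T y) _).1 rfl
    refine ⟨-d, by simp [hd], ?_⟩
    have := congrArg Subtype.val (hT₁ y)
    simp only [Submodule.coe_sub, Submodule.coe_smul] at this
    rw [← this, ← hd, ← hdz]
    simp only [NegMemClass.coe_neg, map_neg, smul_neg]
    abel
  · rintro ⟨d, hdr, hdy⟩
    set a : range A := ⟨A d, mem_range_self A d⟩
    have hSa : S a = r := (hS a r).2 ⟨d, hdr, rfl⟩
    have hTy : T y = -a := by
      rw [← hT₂ (-a), map_neg, hSa]
      congr 1
      ext
      simp only [Submodule.coe_sub, NegMemClass.coe_neg, SetLike.val_smul, smul_neg, ← hdy, ← hdr,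
        a]
      abel
    simp [hTy, hSa]

theorem exists_resolvent_of_isTopCompl
    (h : IsTopCompl ((ker A).map D.subtype) (range A)) {lam : 𝕜} (hlam : lam ≠ 0)
    {U : range A →L[𝕜] range A}
    (hU : ∀ y r : range A, U y = r ↔ ∃ d : D, (d : X) = r ∧ lam • (d : X) - A d = y) :
    ∃ B : X →L[𝕜] X, (∀ x : X, ∃ d : D, (d : X) = B x ∧ lam • (d : X) - A d = x) ∧
      ∀ d : D, B (lam • (d : X) - A d) = d := by
  set N := (ker A).map D.subtype
  set B := ContinuousLinearMap.ofIsTopCompl h (lam⁻¹ • N.subtypeL) ((range A).subtypeL ∘L U)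
  have hB (n : N) (y : range A) : B (n + y) = lam⁻¹ • (n : X) + U y := by
    rw [map_add, ContinuousLinearMap.ofIsTopCompl_apply_left,
      ContinuousLinearMap.ofIsTopCompl_apply_right]
    rfl
  refine ⟨B, fun x => ?_, fun d => ?_⟩
  · obtain ⟨n, hn, y, hy, rfl⟩ := mem_sup.1 (h.isCompl.sup_eq_top ▸ mem_top : x ∈ N ⊔ range A)
    obtain ⟨k, hk, rfl⟩ := mem_map.1 hn
    obtain ⟨d, hd, hdy⟩ := (hU ⟨y, hy⟩ _).1 rfl
    refine ⟨lam⁻¹ • k + d, ?_, ?_⟩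
    · rw [hB ⟨_, hn⟩ ⟨y, hy⟩]
      simp [hd]
    · calc lam • ((lam⁻¹ • k + d : D) : X) - A (lam⁻¹ • k + d)
          _ = k + (lam • (d : X) - A d) := by
            simp only [Submodule.coe_add, Submodule.coe_smul, smul_add, smul_smul,
              mul_inv_cancel₀ hlam, one_smul, map_add, map_smul, mem_ker.1 hk, smul_zero]
            abel
          _ = k + y := by rw [hdy]
  · obtain ⟨k, hk, hr⟩ := exists_mem_ker_sub_mem_range A h.isCompl.codisjoint d
    set r := d - k
    have hn : lam • (k : X) ∈ N := smul_mem _ _ (mem_map_of_mem hk)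
    have hy : lam • (r : X) - A r ∈ range A := sub_mem (smul_mem _ _ hr) (mem_range_self A r)
    have hsplit : lam • (d : X) - A d = ((⟨_, hn⟩ : N) : X) + ((⟨_, hy⟩ : range A) : X) := by
      simp only [AddSubgroupClass.coe_sub, smul_sub, map_sub, mem_ker.1 hk, sub_zero, r]
      abel
    rw [hsplit, hB, (hU _ ⟨r, hr⟩).2 ⟨r, rfl, rfl⟩]
    simp [smul_smul, inv_mul_cancel₀ hlam, r]

theorem not_forall_zero_sub_leftInverse_of_ker_ne_bot (hker : ker A ≠ ⊥) (B : X → X) :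
    ¬ ∀ d : D, B ((0 : 𝕜) • (d : X) - A d) = d := by
  intro hB
  obtain ⟨k, hk, hk0⟩ := (Submodule.ne_bot_iff _).1 hker
  have hBk := hB k
  have hB0 := hB 0
  rw [mem_ker.1 hk, zero_smul, sub_zero] at hBk
  rw [map_zero, Submodule.coe_zero, smul_zero, sub_zero, hBk] at hB0
  exact hk0 (Subtype.ext hB0)

end ClosedOperator

theorem zero_isolated_in_spectrum_general
    (X : Type*) [NormedAddCommGroup X] [NormedSpace ℂ X] [CompleteSpace X]
    (D : Submodule ℂ X)
    (A : D →ₗ[ℂ] X)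
    (hclosed : IsClosed {p : X × X | ∃ d : D, (d : X) = p.1 ∧ A d = p.2})
    (hker_ne : LinearMap.ker A ≠ ⊥)
    (hrange_closed : IsClosed (LinearMap.range A : Set X))
    (hsum : (LinearMap.ker A).map D.subtype ⊔ LinearMap.range A = ⊤)
    (hdisj : (LinearMap.ker A).map D.subtype ⊓ LinearMap.range A = ⊥)
    -- the spectrum of the (unbounded) operator `A`
    (Spec : Set ℂ)
    (hSpec : Spec = {lam : ℂ | ¬ ∃ B : X →L[ℂ] X,
      (∀ x : X, ∃ d : D, (d : X) = B x ∧ lam • (d : X) - A d = x) ∧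
      (∀ d : D, B (lam • (d : X) - A d) = (d : X))}) :
    (0 : ℂ) ∈ Spec ∧ ∃ ε > (0:ℝ), ∀ lam ∈ Spec, lam ≠ 0 → ε ≤ ‖lam‖ := by
  subst hSpec
  have hc : IsCompl ((ker A).map D.subtype) (range A) :=
    ⟨disjoint_iff.2 hdisj, codisjoint_iff.2 hsum⟩
  have hN := isClosed_map_ker_of_isClosed_graph A hclosed
  have : CompleteSpace (range A) := hrange_closed.completeSpace_coe
  obtain ⟨S, hS⟩ := exists_continuousLinearMap_inverse_on_range A hclosed hrange_closed hc
  refine ⟨fun ⟨B, _, hB⟩ => not_forall_zero_sub_leftInverse_of_ker_ne_bot A hker_ne B hB,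
    (‖S‖ + 1)⁻¹, by positivity, fun lam hlam hne => ?_⟩
  by_contra! hsmall
  have hnorm : ‖lam • S‖ < 1 := calc
    ‖lam • S‖ ≤ ‖lam‖ * (‖S‖ + 1) := (S.opNorm_smul_le lam).trans (by gcongr; linarith)
    _ < 1 := (lt_div_iff₀ (by positivity)).1 (by rwa [one_div])
  obtain ⟨U, hU⟩ := exists_resolvent_on_range A hS hnorm
  exact hlam (exists_resolvent_of_isTopCompl A (hc.isTopCompl_of_isClosed hN hrange_closed) hne hU)

/-- If `A₀` is a closed, densely defined operator on a complex Banach space `X₀` such that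
`0` is a semi-simple eigenvalue, i.e. `X₀ = N(A₀) ⊕ R(A₀)` topologically with
`N(A₀) ≠ {0}` finite-dimensional and `R(A₀)` closed, then `0` is an isolated point of the
spectrum of `A₀`. -/
theorem zero_isolated_in_spectrum
    (X : Type*) [NormedAddCommGroup X] [NormedSpace ℂ X] [CompleteSpace X]
    (D : Submodule ℂ X) (hdense : Dense (D : Set X))
    (A : D →ₗ[ℂ] X)
    (hclosed : IsClosed {p : X × X | ∃ d : D, (d : X) = p.1 ∧ A d = p.2})
    (hker_fin : FiniteDimensional ℂ (LinearMap.ker A))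
    (hker_ne : LinearMap.ker A ≠ ⊥)
    (hrange_closed : IsClosed (LinearMap.range A : Set X))
    (hsum : (LinearMap.ker A).map D.subtype ⊔ LinearMap.range A = ⊤)
    (hdisj : (LinearMap.ker A).map D.subtype ⊓ LinearMap.range A = ⊥)
    -- the spectrum of the (unbounded) operator `A`
    (Spec : Set ℂ)
    (hSpec : Spec = {lam : ℂ | ¬ ∃ B : X →L[ℂ] X,
      (∀ x : X, ∃ d : D, (d : X) = B x ∧ lam • (d : X) - A d = x) ∧
      (∀ d : D, B (lam • (d : X) - A d) = (d : X))}) :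
    (0 : ℂ) ∈ Spec ∧ ∃ ε > (0:ℝ), ∀ lam ∈ Spec, lam ≠ 0 → ε ≤ ‖lam‖ :=
  zero_isolated_in_spectrum_general X D A hclosed hker_ne hrange_closed hsum hdisj Spec hSpec
end

section
/- Under the hypotheses of the parameter-continuous implicit function theorem, if in addition $H(x, (y_0, \xi))$ is $C^1$ in $(x, y_0)$ jointly (with $z = (y_0,\xi) \in Y \times W$), then the solution map $\Lambda(y_0, \xi)$ is $C^1$ with respect to $y_0$, and its partial derivative $D_{y_0}\Lambda(y_0,\xi) = -\left(D_x H(\Lambda(y_0,\xi), (y_0,\xi))\right)^{-1} D_{y_0} H(\Lambda(y_0,\xi), (y_0,\xi))$ is jointly continuous in $(y_0, \xi)$. -/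
/-!
Write `A = D_xH` and `B = D_{y₀}H` at `(Λ(y₀,ξ), y₀, ξ)`. Since `H(Λ(·,ξ), ·, ξ) ≡ 0` and `Λ` is
continuous, the linearisation `A dx + B dy` is `o(‖dx‖ + ‖dy‖)` along `dx = Λ(y₀ + dy, ξ) - Λ(y₀, ξ)`;
applying `A⁻¹` gives `dx + A⁻¹B dy = o(‖dx‖ + ‖dy‖)`, which first forces `dx = O(dy)` and then
`dx = -A⁻¹B dy + o(dy)`. Near the origin `A` is close to `D_xH(0,0,0) = I`, hence invertible because
invertible operators form an open set, and the formula is jointly continuous because inversion is.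
-/

open Metric Filter Topology Asymptotics

section

variable {𝕜 X Y Z : Type*} [NontriviallyNormedField 𝕜]
  [NormedAddCommGroup X] [NormedSpace 𝕜 X] [NormedAddCommGroup Y] [NormedSpace 𝕜 Y]
  [NormedAddCommGroup Z] [NormedSpace 𝕜 Z]

theorem HasFDerivAt.implicit_of_continuousAt {F : X × Y → Z} {g : Y → X} {A : X →L[𝕜] Z}
    {B : Y →L[𝕜] Z} {y : Y} (hF : HasFDerivAt F (A.coprod B) (g y, y)) (hA : A.IsInvertible)
    (hg : ContinuousAt g y) (hconst : ∀ᶠ y' in 𝓝 y, F (g y', y') = F (g y, y)) :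
    HasFDerivAt g (-(A.inverse ∘L B)) y := by
  set L : Y →L[𝕜] X := -(A.inverse ∘L B)
  set u : Y → X × Y := fun y' => (g y' - g y, y' - y)
  have hlin : (fun y' => A (g y' - g y) + B (y' - y)) =o[𝓝 y] u := by
    refine (hF.isLittleO.comp_tendsto (hg.prodMk_nhds tendsto_id)).neg_left.congr' ?_ .rfl
    filter_upwards [hconst] with y' hy'
    simp [hy']
  have hrem : (fun y' => g y' - g y - L (y' - y)) =o[𝓝 y] u := by
    refine (A.inverse.isBigO_comp _ _).trans_isLittleO hlin |>.congr_left fun y' => ?_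
    simp only [map_sub, map_add, hA.inverse_apply_self, neg_apply, ContinuousLinearMap.comp_apply,
      L]
    abel
  -- `u` and `(L (y' - y), y' - y)` differ by `(hrem, 0) = o(u)`, so `u` is bounded by `y' - y`.
  have hu : u =O[𝓝 y] fun y' => y' - y := by
    refine (hrem.prod_left (isLittleO_zero u _)).right_isBigO_sub.trans ?_
    refine (isBigO_of_le _ fun y' => le_of_eq ?_).trans ((L.prod (.id 𝕜 Y)).isBigO_comp _ _)
    simp [u]
  exact hasFDerivAt_iff_isLittleO.mpr (hrem.trans_isBigO hu)

theorem ContinuousOn.clm_inverse [CompleteSpace X] {α : Type*} [TopologicalSpace α]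
    {f : α → X →L[𝕜] Z} {s : Set α} (hf : ContinuousOn f s)
    (hinv : ∀ a ∈ s, (f a).IsInvertible) : ContinuousOn (fun a => (f a).inverse) s :=
  fun a ha => ((hinv a ha).contDiffAt_map_inverse (n := 0)).continuousAt.comp_continuousWithinAt
    (hf a ha)

theorem ContinuousAt.eventually_isInvertible [CompleteSpace X] {α : Type*} [TopologicalSpace α]
    {f : α → X →L[𝕜] Z} {a : α} (hf : ContinuousAt f a) (ha : (f a).IsInvertible) :
    ∀ᶠ b in 𝓝 a, (f b).IsInvertible := by
  obtain ⟨e, he⟩ := ha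
  exact hf.preimage_mem_nhds (he ▸ ContinuousLinearEquiv.nhds e)

end

theorem Filter.Eventually.exists_forall_ball_prod {α β : Type*} [PseudoMetricSpace α]
    [PseudoMetricSpace β] {a : α} {b : β} {P : α × β → Prop} (h : ∀ᶠ p in 𝓝 (a, b), P p)
    {r : ℝ} (hr : 0 < r) : ∃ r' > 0, r' ≤ r ∧ ∀ p ∈ ball a r' ×ˢ ball b r', P p := by
  obtain ⟨ε, hε, hball⟩ := Metric.eventually_nhds_iff_ball.mp h
  refine ⟨min ε r, lt_min hε hr, min_le_right _ _, fun p hp => hball p ?_⟩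
  rw [← ball_prod_same]
  exact Set.prod_mono (ball_subset_ball (min_le_left _ _)) (ball_subset_ball (min_le_left _ _)) hp

theorem implicit_map_C1_in_y0_general
    (X Y W : Type*) [NormedAddCommGroup X] [NormedSpace ℝ X] [CompleteSpace X]
    [NormedAddCommGroup Y] [NormedSpace ℝ Y]
    [NormedAddCommGroup W] [NormedSpace ℝ W]
    (ρ : ℝ) (H : X → Y → W → X)
    (Dx : X → Y → W → (X →L[ℝ] X)) (Dy : X → Y → W → (Y →L[ℝ] X))
    (hderiv : ∀ x ∈ ball (0:X) ρ, ∀ y ∈ ball (0:Y) ρ, ∀ ξ ∈ ball (0:W) ρ,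
      HasFDerivAt (fun q : X × Y => H q.1 q.2 ξ) ((Dx x y ξ).coprod (Dy x y ξ)) (x, y))
    (hDcont : ContinuousOn
      (fun p : X × Y × W => (Dx p.1 p.2.1 p.2.2, Dy p.1 p.2.1 p.2.2))
      (ball 0 ρ ×ˢ ball 0 ρ ×ˢ ball 0 ρ))
    (hDx0 : Dx 0 0 0 = ContinuousLinearMap.id ℝ X)
    (r : ℝ) (hr : 0 < r) (hrρ : r ≤ ρ) (Λ : Y → W → X)
    (hΛcont : ContinuousOn (fun p : Y × W => Λ p.1 p.2) (ball 0 r ×ˢ ball 0 r))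
    (hΛ0 : Λ 0 0 = 0)
    (hsol : ∀ y ∈ ball (0:Y) r, ∀ ξ ∈ ball (0:W) r,
      Λ y ξ ∈ ball (0:X) ρ ∧ H (Λ y ξ) y ξ = 0) :
    ∃ r' > (0:ℝ), r' ≤ r ∧
      (∀ y ∈ ball (0:Y) r', ∀ ξ ∈ ball (0:W) r',
        HasFDerivAt (fun y' => Λ y' ξ)
          (-((Dx (Λ y ξ) y ξ).inverse.comp (Dy (Λ y ξ) y ξ))) y) ∧
      ContinuousOn
        (fun p : Y × W => -((Dx (Λ p.1 p.2) p.1 p.2).inverse.comp (Dy (Λ p.1 p.2) p.1 p.2)))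
        (ball 0 r' ×ˢ ball 0 r') := by
  set S : Set (Y × W) := ball 0 r ×ˢ ball 0 r
  have h00 : ((0 : Y), (0 : W)) ∈ S := ⟨mem_ball_self hr, mem_ball_self hr⟩
  have hD : ContinuousOn (fun p : Y × W => (Dx (Λ p.1 p.2) p.1 p.2, Dy (Λ p.1 p.2) p.1 p.2)) S :=
    hDcont.comp (hΛcont.prodMk continuousOn_id) fun p hp =>
      ⟨(hsol _ hp.1 _ hp.2).1, ball_subset_ball hrρ hp.1, ball_subset_ball hrρ hp.2⟩
  have hinv_ev : ∀ᶠ p : Y × W in 𝓝 (0, 0), (Dx (Λ p.1 p.2) p.1 p.2).IsInvertible :=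
    ((hD _ h00).continuousAt ((isOpen_ball.prod isOpen_ball).mem_nhds h00)).fst
      |>.eventually_isInvertible (by rw [hΛ0, hDx0]; exact ⟨.refl ℝ X, rfl⟩)
  obtain ⟨r', hr', hr'r, hinv⟩ := hinv_ev.exists_forall_ball_prod hr
  have hS' : ball (0 : Y) r' ×ˢ ball (0 : W) r' ⊆ S :=
    Set.prod_mono (ball_subset_ball hr'r) (ball_subset_ball hr'r)
  refine ⟨r', hr', hr'r, fun y hy ξ hξ => ?_, ?_⟩
  · obtain ⟨hyr, hξr⟩ := hS' (Set.mk_mem_prod hy hξ)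
    have hΛξ : ContinuousOn (fun y' => Λ y' ξ) (ball 0 r) :=
      hΛcont.comp (continuousOn_id.prodMk continuousOn_const) fun y' hy' => ⟨hy', hξr⟩
    refine (hderiv _ (hsol y hyr ξ hξr).1 y (ball_subset_ball hrρ hyr) ξ
      (ball_subset_ball hrρ hξr)).implicit_of_continuousAt (hinv _ (Set.mk_mem_prod hy hξ))
      (hΛξ.continuousAt (isOpen_ball.mem_nhds hyr)) ?_
    filter_upwards [isOpen_ball.mem_nhds hyr] with y' hy'
    rw [(hsol y' hy' ξ hξr).2, (hsol y hyr ξ hξr).2]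
  · exact (((hD.mono hS').fst.clm_inverse hinv).clm_comp (hD.mono hS').snd).neg

/-- If additionally `H(x,(y₀,ξ))` is jointly `C¹` in `(x,y₀)`, then the implicit solution
map `Λ(y₀,ξ)` is `C¹` in `y₀` with partial derivative
`D_{y₀}Λ = -(D_xH(Λ,(y₀,ξ)))⁻¹ D_{y₀}H(Λ,(y₀,ξ))`, jointly continuous in `(y₀,ξ)`. -/
theorem implicit_map_C1_in_y0
    (X Y W : Type*) [NormedAddCommGroup X] [NormedSpace ℝ X] [CompleteSpace X]
    [NormedAddCommGroup Y] [NormedSpace ℝ Y] [CompleteSpace Y]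
    [NormedAddCommGroup W] [NormedSpace ℝ W]
    (ρ : ℝ) (hρ : 0 < ρ) (H : X → Y → W → X)
    (hcont : ContinuousOn (fun p : X × Y × W => H p.1 p.2.1 p.2.2)
      (ball 0 ρ ×ˢ ball 0 ρ ×ˢ ball 0 ρ))
    (Dx : X → Y → W → (X →L[ℝ] X)) (Dy : X → Y → W → (Y →L[ℝ] X))
    (hderiv : ∀ x ∈ ball (0:X) ρ, ∀ y ∈ ball (0:Y) ρ, ∀ ξ ∈ ball (0:W) ρ,
      HasFDerivAt (fun q : X × Y => H q.1 q.2 ξ) ((Dx x y ξ).coprod (Dy x y ξ)) (x, y))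
    (hDcont : ContinuousOn
      (fun p : X × Y × W => (Dx p.1 p.2.1 p.2.2, Dy p.1 p.2.1 p.2.2))
      (ball 0 ρ ×ˢ ball 0 ρ ×ˢ ball 0 ρ))
    (hH0 : H 0 0 0 = 0) (hDx0 : Dx 0 0 0 = ContinuousLinearMap.id ℝ X)
    (r : ℝ) (hr : 0 < r) (hrρ : r ≤ ρ) (Λ : Y → W → X)
    (hΛcont : ContinuousOn (fun p : Y × W => Λ p.1 p.2) (ball 0 r ×ˢ ball 0 r))
    (hΛ0 : Λ 0 0 = 0)
    (hsol : ∀ y ∈ ball (0:Y) r, ∀ ξ ∈ ball (0:W) r,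
      Λ y ξ ∈ ball (0:X) ρ ∧ H (Λ y ξ) y ξ = 0) :
    ∃ r' > (0:ℝ), r' ≤ r ∧
      (∀ y ∈ ball (0:Y) r', ∀ ξ ∈ ball (0:W) r',
        HasFDerivAt (fun y' => Λ y' ξ)
          (-((Dx (Λ y ξ) y ξ).inverse.comp (Dy (Λ y ξ) y ξ))) y) ∧
      ContinuousOn
        (fun p : Y × W => -((Dx (Λ p.1 p.2) p.1 p.2).inverse.comp (Dy (Λ p.1 p.2) p.1 p.2)))
        (ball 0 r' ×ˢ ball 0 r') :=
  implicit_map_C1_in_y0_general X Y W ρ H Dx Dy hderiv hDcont hDx0 r hr hrρ Λ hΛcont hΛ0 hsol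
end
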